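/- arXiv:1104.1352 — 2 statements merged into one kernel-verified Lean document; each statement's English description precedes it below -/
import Mathlib

section
/- If |δ_i| ≤ u for i = 1,…,n, each ρ_i ∈ {-1,1}, and n·u < 1, then ∏_{i=1}^n (1+δ_i)^{ρ_i} = 1 + θ for some θ with |θ| ≤ n·u/(1 − n·u). -/
/-! Each factor `(1 + δᵢ) ^ ρᵢ` lies in `[1 - u, (1 - u)⁻¹]`, so the product lies in
`[(1 - u) ^ n, (1 - u)⁻ⁿ]`. Bernoulli's inequality `1 - n u ≤ (1 - u) ^ n` widens this to
`[1 - n u, (1 - n u)⁻¹]`, and every point of that interval is within `n u / (1 - n u)` of `1`. -/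

open Finset

lemma one_add_zpow_mem_Icc_of_abs_le {δ u : ℝ} {ρ : ℤ} (hδ : |δ| ≤ u) (hu : u < 1)
    (hρ : ρ = 1 ∨ ρ = -1) : (1 + δ) ^ ρ ∈ Set.Icc (1 - u) (1 - u)⁻¹ := by
  obtain ⟨hδl, hδu⟩ := abs_le.mp hδ
  have hpos : 0 < 1 + δ := by linarith
  rcases hρ with rfl | rfl
  · rw [zpow_one]
    refine ⟨by linarith, ?_⟩
    rw [← one_div, le_div_iff₀ (by linarith)]
    nlinarith
  · rw [zpow_neg_one]
    refine ⟨?_, inv_anti₀ (by linarith) (by linarith)⟩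
    rw [← one_div, le_div_iff₀ hpos]
    nlinarith

lemma Finset.prod_mem_Icc_pow_card {ι R : Type*} [CommSemiring R] [PartialOrder R]
    [IsOrderedRing R] (s : Finset ι) {f : ι → R} {a b : R} (ha : 0 ≤ a)
    (hf : ∀ i ∈ s, f i ∈ Set.Icc a b) : ∏ i ∈ s, f i ∈ Set.Icc (a ^ #s) (b ^ #s) := by
  constructor
  · simpa only [prod_const] using
      prod_le_prod (fun _ _ => ha) fun i hi => (hf i hi).1
  · simpa only [prod_const] using
      prod_le_prod (fun i hi => ha.trans (hf i hi).1) fun i hi => (hf i hi).2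

lemma abs_sub_one_le_div_of_mem_Icc {p x : ℝ} (hx0 : 0 ≤ x) (hx1 : x < 1)
    (hp : p ∈ Set.Icc (1 - x) (1 - x)⁻¹) : |p - 1| ≤ x / (1 - x) := by
  have hpos : 0 < 1 - x := by linarith
  have hx : x ≤ x / (1 - x) := le_div_self hx0 hpos (by linarith)
  have hinv : (1 - x)⁻¹ - 1 = x / (1 - x) := by field_simp; ring
  rw [abs_le]
  constructor <;> linarith [hp.1, hp.2]

theorem prod_one_add_delta_pow (n : ℕ) (u : ℝ) (δ : Fin n → ℝ) (ρ : Fin n → ℤ)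
    (hu0 : 0 < u) (hu1 : u < 1)
    (hδ : ∀ i, |δ i| ≤ u) (hρ : ∀ i, ρ i = 1 ∨ ρ i = -1)
    (hnu : (n : ℝ) * u < 1) :
    ∃ θ : ℝ, (∏ i, (1 + δ i) ^ (ρ i)) = 1 + θ ∧ |θ| ≤ (n : ℝ) * u / (1 - (n : ℝ) * u) := by
  have hbernoulli : 1 - n * u ≤ (1 - u) ^ n := by
    simpa only [mul_neg, ← sub_eq_add_neg] using one_add_mul_le_pow (a := -u) (by linarith) n
  have hprod := univ.prod_mem_Icc_pow_card (sub_nonneg.mpr hu1.le) fun i _ =>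
    one_add_zpow_mem_Icc_of_abs_le (hδ i) hu1 (hρ i)
  rw [card_univ, Fintype.card_fin, inv_pow] at hprod
  have hwide : ∏ i, (1 + δ i) ^ ρ i ∈ Set.Icc (1 - n * u) (1 - n * u)⁻¹ :=
    ⟨hbernoulli.trans hprod.1, hprod.2.trans (inv_anti₀ (by linarith) hbernoulli)⟩
  exact ⟨_, (add_sub_cancel _ _).symm, abs_sub_one_le_div_of_mem_Icc (by positivity) hnu hwide⟩
end

section
/- Let x be in the interior of the Lorentz cone L_p and g(x) = ∇f(x) where f(x) = −ln(x₀² − ‖x̄‖²). Then −g(x) is in the interior of L_p and −g(−g(x)) = x. -/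
/-!
Write `Q x = x₀² − ‖x̄‖²` for the Lorentz form and `R x = (x₀, −x̄)` for the reflection that
preserves it. The gradient of `−log Q` at `x` is `−2 R x / Q x = −2 x⁻¹`, where `x⁻¹ = R x / Q x`
is the inverse of `x` in the Jordan algebra of the cone. Since `Q` is quadratic and `R`-invariant,
`Q (x⁻¹) = (Q x)⁻¹` and `(c x)⁻¹ = c⁻¹ x⁻¹`, so inversion is an involution; scaling `R x` by the
positive number `2 / Q x` keeps it in the interior of the cone, and `−g(−g x) = 2 (2 x⁻¹)⁻¹ = x`.
-/

/-- The logarithmic barrier of the Lorentz cone `L_p ⊂ ℝ^{p+1}`. -/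
noncomputable def lorentzBarrier (p : ℕ) (x : EuclideanSpace ℝ (Fin (p + 1))) : ℝ :=
  -Real.log ((x 0) ^ 2 - ∑ i : Fin p, (x i.succ) ^ 2)

open Real InnerProductSpace ContinuousLinearMap

noncomputable section

variable {p : ℕ}

def lorentzForm (x : EuclideanSpace ℝ (Fin (p + 1))) : ℝ :=
  x 0 ^ 2 - ∑ i : Fin p, x i.succ ^ 2

/-- `(x₀, −x̄)`, written so that linearity is visible. -/
def lorentzReflect (x : EuclideanSpace ℝ (Fin (p + 1))) : EuclideanSpace ℝ (Fin (p + 1)) :=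
  (2 * x 0) • EuclideanSpace.single 0 1 - x

def lorentzInv (x : EuclideanSpace ℝ (Fin (p + 1))) : EuclideanSpace ℝ (Fin (p + 1)) :=
  (lorentzForm x)⁻¹ • lorentzReflect x

def lorentzConeInterior (p : ℕ) : Set (EuclideanSpace ℝ (Fin (p + 1))) :=
  {x | √(∑ i : Fin p, x i.succ ^ 2) < x 0}

end

section

variable {p : ℕ} (x : EuclideanSpace ℝ (Fin (p + 1)))

lemma mem_lorentzConeInterior :
    x ∈ lorentzConeInterior p ↔ √(∑ i : Fin p, x i.succ ^ 2) < x 0 :=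
  Iff.rfl

@[simp] lemma lorentzReflect_apply_zero : lorentzReflect x 0 = x 0 := by
  simp only [lorentzReflect, PiLp.sub_apply, PiLp.smul_apply, PiLp.single_eq_same, smul_eq_mul,
    mul_one]
  ring

@[simp] lemma lorentzReflect_apply_succ (i : Fin p) : lorentzReflect x i.succ = -x i.succ := by
  simp [lorentzReflect, Fin.succ_ne_zero]

lemma lorentzReflect_smul (c : ℝ) : lorentzReflect (c • x) = c • lorentzReflect x := by
  simp only [lorentzReflect, PiLp.smul_apply, smul_eq_mul, smul_sub, smul_smul]
  ring_nf

lemma lorentzReflect_lorentzReflect : lorentzReflect (lorentzReflect x) = x := by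
  ext i
  cases i using Fin.cases <;> simp

lemma lorentzForm_eq_two_mul_sq_sub_norm_sq : lorentzForm x = 2 * x 0 ^ 2 - ‖x‖ ^ 2 := by
  simp only [lorentzForm, EuclideanSpace.norm_sq_eq, norm_eq_abs, sq_abs, Fin.sum_univ_succ]
  ring

lemma lorentzForm_smul (c : ℝ) : lorentzForm (c • x) = c ^ 2 * lorentzForm x := by
  simp only [lorentzForm, PiLp.smul_apply, smul_eq_mul, mul_pow, ← Finset.mul_sum]
  ring

lemma lorentzForm_lorentzReflect : lorentzForm (lorentzReflect x) = lorentzForm x := by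
  simp [lorentzForm]

lemma lorentzForm_lorentzInv : lorentzForm (lorentzInv x) = (lorentzForm x)⁻¹ := by
  rw [lorentzInv, lorentzForm_smul, lorentzForm_lorentzReflect]
  by_cases h : lorentzForm x = 0 <;> field_simp [h]

lemma lorentzInv_smul (c : ℝ) : lorentzInv (c • x) = c⁻¹ • lorentzInv x := by
  rw [lorentzInv, lorentzInv, lorentzForm_smul, lorentzReflect_smul, smul_smul, smul_smul]
  congr 1
  rcases eq_or_ne c 0 with rfl | hc
  · simp
  · field_simp

lemma lorentzInv_lorentzInv (hx : lorentzForm x ≠ 0) : lorentzInv (lorentzInv x) = x := by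
  rw [lorentzInv, lorentzForm_lorentzInv, inv_inv, lorentzInv, lorentzReflect_smul,
    lorentzReflect_lorentzReflect, smul_inv_smul₀ hx]

lemma lorentzForm_pos_of_mem_lorentzConeInterior (hx : x ∈ lorentzConeInterior p) :
    0 < lorentzForm x := by
  have hx0 : 0 < x 0 := (Real.sqrt_nonneg _).trans_lt hx
  rw [mem_lorentzConeInterior, Real.sqrt_lt' hx0] at hx
  exact sub_pos.mpr hx

lemma smul_lorentzReflect_mem_lorentzConeInterior {c : ℝ} (hc : 0 < c)
    (hx : x ∈ lorentzConeInterior p) : c • lorentzReflect x ∈ lorentzConeInterior p := by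
  have hsum : ∑ i : Fin p, (c • lorentzReflect x) i.succ ^ 2 =
      c ^ 2 * ∑ i : Fin p, x i.succ ^ 2 := by
    simp [mul_pow, Finset.mul_sum]
  rw [mem_lorentzConeInterior, hsum, Real.sqrt_mul (sq_nonneg c), Real.sqrt_sq hc.le]
  simpa using mul_lt_mul_of_pos_left hx hc

lemma hasGradientAt_lorentzForm : HasGradientAt lorentzForm (2 • lorentzReflect x) x := by
  have hproj : HasFDerivAt (fun y : EuclideanSpace ℝ (Fin (p + 1)) => y 0)
      (EuclideanSpace.proj (0 : Fin (p + 1)) : EuclideanSpace ℝ (Fin (p + 1)) →L[ℝ] ℝ) x :=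
    (EuclideanSpace.proj (0 : Fin (p + 1)) : EuclideanSpace ℝ (Fin (p + 1)) →L[ℝ] ℝ).hasFDerivAt
  rw [hasGradientAt_iff_hasFDerivAt, funext lorentzForm_eq_two_mul_sq_sub_norm_sq]
  refine (((hproj.pow 2).const_mul 2).sub
    (hasStrictFDerivAt_norm_sq x).hasFDerivAt).congr_fderiv ?_
  ext h
  simp only [Nat.add_one_sub_one, pow_one, nsmul_eq_mul, Nat.cast_ofNat, sub_apply, smul_apply,
    PiLp.proj_apply, smul_eq_mul, coe_innerSL_apply, lorentzReflect, map_nsmul, map_sub, map_smul,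
    toDual_apply_apply, EuclideanSpace.inner_single_left, ringHom_apply, one_mul]
  ring

lemma hasGradientAt_lorentzBarrier (hx : lorentzForm x ≠ 0) :
    HasGradientAt (lorentzBarrier p) (-(2 : ℝ) • lorentzInv x) x := by
  rw [hasGradientAt_iff_hasFDerivAt]
  refine (((hasGradientAt_iff_hasFDerivAt.mp (hasGradientAt_lorentzForm x)).log hx).fun_neg
    ).congr_fderiv ?_
  ext h
  simp only [map_nsmul, neg_apply, smul_apply, toDual_apply_apply, nsmul_eq_mul, Nat.cast_ofNat,
    smul_eq_mul, lorentzInv, neg_smul, map_neg, map_smul, neg_inj]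
  ring

end

/-- `−g(x)` lies in the interior of the Lorentz cone and `−g(−g(x)) = x`. -/
theorem neg_gradient_lorentzBarrier (p : ℕ) (x : EuclideanSpace ℝ (Fin (p + 1)))
    (hx : Real.sqrt (∑ i : Fin p, (x i.succ) ^ 2) < x 0) :
    (Real.sqrt (∑ i : Fin p, ((-gradient (lorentzBarrier p) x) i.succ) ^ 2) <
        (-gradient (lorentzBarrier p) x) 0) ∧
    -gradient (lorentzBarrier p) (-gradient (lorentzBarrier p) x) = x := by
  have hQ := lorentzForm_pos_of_mem_lorentzConeInterior x hx
  have hg : -gradient (lorentzBarrier p) x = (2 : ℝ) • lorentzInv x := by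
    rw [(hasGradientAt_lorentzBarrier x hQ.ne').gradient, neg_smul, neg_neg]
  have hmem : (2 : ℝ) • lorentzInv x ∈ lorentzConeInterior p := by
    rw [lorentzInv, smul_smul]
    exact smul_lorentzReflect_mem_lorentzConeInterior x (by positivity) hx
  have hQ' := lorentzForm_pos_of_mem_lorentzConeInterior _ hmem
  refine ⟨hg ▸ hmem, ?_⟩
  rw [hg, (hasGradientAt_lorentzBarrier _ hQ'.ne').gradient, neg_smul, neg_neg, lorentzInv_smul,
    smul_inv_smul₀ two_ne_zero, lorentzInv_lorentzInv x hQ.ne']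
end
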